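/- arXiv:1708.01459 — 3 statements merged into one kernel-verified Lean document; each statement's English description precedes it below -/
import Mathlib

section
/- If L is the Laplacian matrix of a strongly connected weighted directed graph on N nodes (with nonnegative off-diagonal adjacency weights and row sums zero), then there exists a unique positive row vector r = (r_1,...,r_N) with rL = 0 and r·1_N = N. -/
open Matrix BigOperators

section Aux

variable {N : ℕ}

/-- out-degree (row sum) -/
private def dd (a : Fin N → Fin N → ℝ) (i : Fin N) : ℝ := ∑ k, a i k

private lemma step_pos (a : Fin N → Fin N → ℝ) (hnn : ∀ i j, 0 ≤ a i j)
    (r : Fin N → ℝ) (hrnn : ∀ i, 0 ≤ r i)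
    (hker : ∀ j, r j * dd a j = ∑ i, r i * a i j)
    {u v : Fin N} (h : a v u ≠ 0) (hv : 0 < r v) : 0 < r u := by
  have h1 : 0 < r v * a v u := mul_pos hv (lt_of_le_of_ne (hnn v u) (Ne.symm h))
  have h2 : r v * a v u ≤ ∑ i, r i * a i u :=
    Finset.single_le_sum (f := fun i => r i * a i u)
      (fun i _ => mul_nonneg (hrnn i) (hnn i u)) (Finset.mem_univ v)
  have h3 : 0 < r u * dd a u := by rw [hker u]; exact lt_of_lt_of_le h1 h2
  rcases (hrnn u).lt_or_eq with h' | h'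
  · exact h'
  · exfalso; rw [← h', zero_mul] at h3; exact lt_irrefl 0 h3

private lemma chain_pos (a : Fin N → Fin N → ℝ) (hnn : ∀ i j, 0 ≤ a i j)
    (r : Fin N → ℝ) (hrnn : ∀ i, 0 ≤ r i)
    (hker : ∀ j, r j * dd a j = ∑ i, r i * a i j)
    {u v : Fin N} (h : Relation.TransGen (fun u v : Fin N => a v u ≠ 0) u v)
    (hv : 0 < r v) : 0 < r u := by
  induction h with
  | single h' => exact step_pos a hnn r hrnn hker h' hv
  | tail _ h' ih => exact ih (step_pos a hnn r hrnn hker h' hv)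

private lemma unique_aux (hN : 0 < N) (a : Fin N → Fin N → ℝ)
    (hnn : ∀ i j, 0 ≤ a i j)
    (hconn : ∀ i j : Fin N, i ≠ j →
      Relation.TransGen (fun u v : Fin N => a v u ≠ 0) i j)
    (r r' : Fin N → ℝ)
    (hrpos : ∀ i, 0 < r i) (hr'pos : ∀ i, 0 < r' i)
    (hrker : ∀ j, r j * dd a j = ∑ i, r i * a i j)
    (hr'ker : ∀ j, r' j * dd a j = ∑ i, r' i * a i j)
    (hsum : ∑ i, r i = ∑ i, r' i) : r = r' := by
  have hne : (Finset.univ : Finset (Fin N)).Nonempty := ⟨⟨0, hN⟩, Finset.mem_univ _⟩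
  obtain ⟨i0, _, hi0⟩ := Finset.exists_min_image Finset.univ (fun i => r i / r' i) hne
  set c : ℝ := r i0 / r' i0 with hc
  set t : Fin N → ℝ := fun i => r i - c * r' i with ht
  have htnn : ∀ i, 0 ≤ t i := by
    intro i
    have := hi0 i (Finset.mem_univ i)
    have h2 : c * r' i ≤ r i := (le_div_iff₀ (hr'pos i)).mp this
    simp only [ht]; linarith
  have hti0 : t i0 = 0 := by
    simp only [ht, hc]
    rw [div_mul_cancel₀ _ (ne_of_gt (hr'pos i0)), sub_self]
  have htker : ∀ j, t j * dd a j = ∑ i, t i * a i j := by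
    intro j
    calc t j * dd a j = (∑ i, r i * a i j) - c * (∑ i, r' i * a i j) := by
          rw [← hrker j, ← hr'ker j]; simp only [ht]; ring
    _ = ∑ i, t i * a i j := by
        rw [Finset.mul_sum, ← Finset.sum_sub_distrib]
        exact Finset.sum_congr rfl fun i _ => by simp only [ht]; ring
  have htzero : ∀ i, t i = 0 := by
    intro k
    by_contra hk
    have hkpos : 0 < t k := lt_of_le_of_ne (htnn k) (Ne.symm hk)
    have hkne : i0 ≠ k := by
      intro h; rw [h] at hti0; rw [hti0] at hkpos; exact lt_irrefl 0 hkpos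
    have := chain_pos a hnn t htnn htker (hconn i0 k hkne) hkpos
    rw [hti0] at this; exact lt_irrefl 0 this
  have hrc : ∀ i, r i = c * r' i := fun i => by
    have := htzero i; simp only [ht] at this; linarith
  have hsum' : ∑ i, r i = c * ∑ i, r' i := by
    rw [Finset.mul_sum]; exact Finset.sum_congr rfl fun i _ => hrc i
  have hs'pos : 0 < ∑ i, r' i := Finset.sum_pos (fun i _ => hr'pos i) hne
  have hc1 : c = 1 := by
    have : c * ∑ i, r' i = 1 * ∑ i, r' i := by rw [one_mul, ← hsum', hsum]
    exact mul_right_cancel₀ (ne_of_gt hs'pos) this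
  funext i
  rw [hrc i, hc1, one_mul]

end Aux

/-- If `L` is the Laplacian of a strongly connected weighted digraph on `N` nodes,
then there is a unique positive row vector `r` with `r L = 0` and `r ⬝ 1 = N`. -/
theorem stmt_0 (N : ℕ) (hN : 0 < N) (a : Fin N → Fin N → ℝ)
    (hnn : ∀ i j, 0 ≤ a i j) (hdiag : ∀ i, a i i = 0)
    (hconn : ∀ i j : Fin N, i ≠ j →
      Relation.TransGen (fun u v : Fin N => a v u ≠ 0) i j)
    (L : Matrix (Fin N) (Fin N) ℝ)
    (hL : L = Matrix.of fun i j => (if i = j then ∑ k, a i k else 0) - a i j) :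
    ∃! r : Fin N → ℝ,
      (∀ i, 0 < r i) ∧ Matrix.vecMul r L = 0 ∧ ∑ i, r i = N := by
  have hNe : (0:ℝ) < N := by exact_mod_cast hN
  have hune : (Finset.univ : Finset (Fin N)).Nonempty := ⟨⟨0, hN⟩, Finset.mem_univ _⟩
  have hddnn : ∀ i, 0 ≤ dd a i := fun i => Finset.sum_nonneg fun k _ => hnn i k
  -- characterization of left kernel vectors
  have happly : ∀ (r : Fin N → ℝ) (j : Fin N),
      Matrix.vecMul r L j = r j * dd a j - ∑ i, r i * a i j := by
    intro r j
    simp only [hL, Matrix.vecMul, dotProduct, Matrix.of_apply, mul_sub,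
      Finset.sum_sub_distrib, mul_ite, mul_zero]
    rw [Finset.sum_ite_eq' Finset.univ j (fun i => r i * ∑ k, a i k)]
    simp [dd]
  have hchar : ∀ r : Fin N → ℝ,
      Matrix.vecMul r L = 0 ↔ ∀ j, r j * dd a j = ∑ i, r i * a i j := by
    intro r
    constructor
    · intro h j
      have := congrFun h j
      rw [happly r j] at this
      simp only [Pi.zero_apply] at this
      linarith
    · intro h
      funext j
      rw [happly r j, h j]
      simp
  -- L is singular, so it has a nonzero left kernel vector
  have hone : L *ᵥ (fun _ => (1:ℝ)) = 0 := by
    funext i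
    simp only [hL, Matrix.mulVec, dotProduct, Matrix.of_apply, mul_one,
      Finset.sum_sub_distrib, Pi.zero_apply]
    rw [Finset.sum_ite_eq Finset.univ i (fun _ => ∑ k, a i k)]
    simp
  have hdet : L.det = 0 :=
    Matrix.exists_mulVec_eq_zero_iff.mp
      ⟨fun _ => (1:ℝ), by
        intro h
        have := congrFun h ⟨0, hN⟩
        simp at this, hone⟩
  have hdetT : Lᵀ.det = 0 := by rw [Matrix.det_transpose]; exact hdet
  obtain ⟨r0, hr0ne, hr0⟩ := Matrix.exists_mulVec_eq_zero_iff.mpr hdetT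
  have hr0ker : Matrix.vecMul r0 L = 0 := by rw [← Matrix.mulVec_transpose]; exact hr0
  have hr0ker' := (hchar r0).mp hr0ker
  -- pass to absolute values
  set s : Fin N → ℝ := fun i => |r0 i| with hs
  have hsnn : ∀ i, 0 ≤ s i := fun i => abs_nonneg _
  have hle : ∀ j, s j * dd a j ≤ ∑ i, s i * a i j := by
    intro j
    calc s j * dd a j = |r0 j * dd a j| := by
          rw [abs_mul, abs_of_nonneg (hddnn j)]
    _ = |∑ i, r0 i * a i j| := by rw [hr0ker' j]
    _ ≤ ∑ i, |r0 i * a i j| := Finset.abs_sum_le_sum_abs _ _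
    _ = ∑ i, s i * a i j := by
        exact Finset.sum_congr rfl fun i _ => by
          rw [abs_mul, abs_of_nonneg (hnn i j)]
  have hsumeq : ∑ j, s j * dd a j = ∑ j, ∑ i, s i * a i j := by
    rw [Finset.sum_comm]
    exact Finset.sum_congr rfl fun j _ => by rw [dd, Finset.mul_sum]
  have hsker : ∀ j, s j * dd a j = ∑ i, s i * a i j := by
    have := (Finset.sum_eq_sum_iff_of_le (fun j _ => hle j)).mp hsumeq
    exact fun j => this j (Finset.mem_univ j)
  -- s is positive everywhere
  obtain ⟨j0, hj0⟩ : ∃ j, r0 j ≠ 0 := by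
    by_contra h
    push_neg at h
    exact hr0ne (funext h)
  have hj0pos : 0 < s j0 := abs_pos.mpr hj0
  have hspos : ∀ i, 0 < s i := by
    intro i
    by_cases hij : i = j0
    · rw [hij]; exact hj0pos
    · exact chain_pos a hnn s hsnn hsker (hconn i j0 hij) hj0pos
  -- normalize
  have hSpos : 0 < ∑ i, s i := Finset.sum_pos (fun i _ => hspos i) hune
  set S : ℝ := ∑ i, s i with hS
  refine ⟨fun i => (N / S) * s i, ⟨?_, ?_, ?_⟩, ?_⟩
  · intro i
    exact mul_pos (div_pos hNe hSpos) (hspos i)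
  · rw [hchar]
    intro j
    calc (N / S) * s j * dd a j = (N / S) * (s j * dd a j) := by ring
    _ = (N / S) * ∑ i, s i * a i j := by rw [hsker j]
    _ = ∑ i, (N / S) * s i * a i j := by
        rw [Finset.mul_sum]; exact Finset.sum_congr rfl fun i _ => by ring
  · rw [← Finset.mul_sum, ← hS, div_mul_cancel₀]
    exact ne_of_gt hSpos
  · rintro r' ⟨hr'pos, hr'ker, hr'sum⟩
    apply unique_aux hN a hnn hconn r' _ hr'pos
      (fun i => mul_pos (div_pos hNe hSpos) (hspos i))
      ((hchar r').mp hr'ker)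
      (by
        intro j
        calc (N / S) * s j * dd a j = (N / S) * (s j * dd a j) := by ring
        _ = (N / S) * ∑ i, s i * a i j := by rw [hsker j]
        _ = ∑ i, (N / S) * s i * a i j := by
            rw [Finset.mul_sum]; exact Finset.sum_congr rfl fun i _ => by ring)
    rw [hr'sum, ← Finset.mul_sum, ← hS, div_mul_cancel₀]
    exact ne_of_gt hSpos
end

section
/- Let L be the Laplacian of a strongly connected weighted digraph, r the positive row vector with rL = 0 and r·1_N = N, and R = diag(r_1,...,r_N). Then the matrix L̂ := RL + Lᵀ R is symmetric positive semi-definite and satisfies L̂·1_N = 0 and 1_Nᵀ·L̂ = 0. -/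
/-!
Since `L 1 = 0` and `r L = 0`, the symmetric matrix `L̂ = R L + Lᵀ R` has zero row and column
sums, so its quadratic form is `x ↦ -½ ∑ᵢⱼ L̂ᵢⱼ (xᵢ - xⱼ)²`. Its off-diagonal entries
`rᵢ Lᵢⱼ + rⱼ Lⱼᵢ` are `≤ 0` because `r ≥ 0` and `L` has nonpositive off-diagonal entries,
hence the form is nonnegative.
-/

open Matrix BigOperators

namespace Matrix

variable {ι : Type*} [Fintype ι]

theorem dotProduct_mulVec_eq_neg_half_sum_mul_sq (M : Matrix ι ι ℝ)
    (hrow : M *ᵥ 1 = 0) (hcol : 1 ᵥ* M = 0) (x : ι → ℝ) :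
    x ⬝ᵥ M *ᵥ x = -(1 / 2) * ∑ i, ∑ j, M i j * (x i - x j) ^ 2 := by
  have hrow' : ∀ i, ∑ j, M i j = 0 := fun i => by
    simpa [mulVec, dotProduct] using congrFun hrow i
  have hcol' : ∀ j, ∑ i, M i j = 0 := fun j => by
    simpa [vecMul, dotProduct] using congrFun hcol j
  have hsq_row : ∑ i, ∑ j, x i ^ 2 * M i j = 0 := by
    simp only [← Finset.mul_sum, hrow', mul_zero, Finset.sum_const_zero]
  have hsq_col : ∑ i, ∑ j, x j ^ 2 * M i j = 0 := by
    rw [Finset.sum_comm]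
    simp only [← Finset.mul_sum, hcol', mul_zero, Finset.sum_const_zero]
  have hexpand : ∑ i, ∑ j, M i j * (x i - x j) ^ 2 =
      ∑ i, ∑ j, (x i ^ 2 * M i j - 2 * (x i * M i j * x j) + x j ^ 2 * M i j) :=
    Finset.sum_congr rfl fun i _ => Finset.sum_congr rfl fun j _ => by ring
  have hquad : x ⬝ᵥ M *ᵥ x = ∑ i, ∑ j, x i * M i j * x j := by
    simp only [dotProduct, mulVec, Finset.mul_sum, mul_assoc]
  rw [hexpand, hquad]
  simp only [Finset.sum_add_distrib, Finset.sum_sub_distrib, hsq_row, hsq_col]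
  simp only [← Finset.mul_sum]
  ring

theorem posSemidef_of_mulVec_one_eq_zero_of_offDiag_nonpos {M : Matrix ι ι ℝ} (hM : M.IsHermitian)
    (hrow : M *ᵥ 1 = 0) (hoff : ∀ i j, i ≠ j → M i j ≤ 0) : M.PosSemidef := by
  have hcol : 1 ᵥ* M = 0 := by
    rw [← mulVec_transpose, ← conjTranspose_eq_transpose_of_trivial, hM, hrow]
  refine .of_dotProduct_mulVec_nonneg hM fun x => ?_
  rw [star_trivial, dotProduct_mulVec_eq_neg_half_sum_mul_sq M hrow hcol]
  have : ∑ i, ∑ j, M i j * (x i - x j) ^ 2 ≤ 0 := by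
    refine Finset.sum_nonpos fun i _ => Finset.sum_nonpos fun j _ => ?_
    rcases eq_or_ne i j with rfl | hij
    · simp
    · exact mul_nonpos_of_nonpos_of_nonneg (hoff i j hij) (sq_nonneg _)
  linarith

variable [DecidableEq ι]

theorem isSymm_diagonal_mul_add_transpose_mul_diagonal {α : Type*} [CommSemiring α]
    (r : ι → α) (L : Matrix ι ι α) : (diagonal r * L + Lᵀ * diagonal r).IsSymm := by
  rw [IsSymm, transpose_add, transpose_mul, transpose_mul, transpose_transpose,
    diagonal_transpose, add_comm]

theorem diagonal_mul_add_transpose_mul_diagonal_mulVec_one {α : Type*} [CommSemiring α]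
    {r : ι → α} {L : Matrix ι ι α} (hL : L *ᵥ 1 = 0) (hrL : r ᵥ* L = 0) :
    (diagonal r * L + Lᵀ * diagonal r) *ᵥ 1 = 0 := by
  have hr : diagonal r *ᵥ 1 = r :=
    funext fun i => by rw [mulVec_diagonal, Pi.one_apply, mul_one]
  rw [add_mulVec, ← mulVec_mulVec, hL, ← mulVec_mulVec, hr, mulVec_transpose, hrL,
    mulVec_zero, add_zero]

theorem posSemidef_diagonal_mul_add_transpose_mul_diagonal {r : ι → ℝ} {L : Matrix ι ι ℝ}
    (hr : ∀ i, 0 ≤ r i) (hL : L *ᵥ 1 = 0) (hrL : r ᵥ* L = 0) (hoff : ∀ i j, i ≠ j → L i j ≤ 0) :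
    (diagonal r * L + Lᵀ * diagonal r).PosSemidef := by
  have hsymm := isSymm_diagonal_mul_add_transpose_mul_diagonal r L
  refine posSemidef_of_mulVec_one_eq_zero_of_offDiag_nonpos
    (by rw [IsHermitian, conjTranspose_eq_transpose_of_trivial]; exact hsymm)
    (diagonal_mul_add_transpose_mul_diagonal_mulVec_one hL hrL) fun i j hij => ?_
  simp only [add_apply, diagonal_mul, mul_diagonal, transpose_apply]
  exact add_nonpos (mul_nonpos_of_nonneg_of_nonpos (hr i) (hoff i j hij))
    (mul_nonpos_of_nonpos_of_nonneg (hoff j i hij.symm) (hr j))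

end Matrix

section WeightedLaplacian

variable {ι : Type*} [Fintype ι] [DecidableEq ι]

def weightedLaplacian (a : Matrix ι ι ℝ) : Matrix ι ι ℝ :=
  of fun i j => (if i = j then ∑ k, a i k else 0) - a i j

theorem weightedLaplacian_mulVec_one (a : Matrix ι ι ℝ) : weightedLaplacian a *ᵥ 1 = 0 := by
  funext i
  simp [weightedLaplacian, mulVec, dotProduct, Finset.sum_sub_distrib]

theorem weightedLaplacian_apply_of_ne (a : Matrix ι ι ℝ) {i j : ι} (hij : i ≠ j) :
    weightedLaplacian a i j = -a i j := by
  simp [weightedLaplacian, hij]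

end WeightedLaplacian

theorem stmt_1_general (N : ℕ) (a : Fin N → Fin N → ℝ)
    (hnn : ∀ i j, 0 ≤ a i j)
    (L : Matrix (Fin N) (Fin N) ℝ)
    (hL : L = Matrix.of fun i j => (if i = j then ∑ k, a i k else 0) - a i j)
    (r : Fin N → ℝ) (hrpos : ∀ i, 0 < r i)
    (hrL : Matrix.vecMul r L = 0)
    (R : Matrix (Fin N) (Fin N) ℝ) (hR : R = Matrix.diagonal r) :
    (R * L + Lᵀ * R).PosSemidef ∧
      (R * L + Lᵀ * R) *ᵥ (fun _ => (1 : ℝ)) = 0 ∧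
      Matrix.vecMul (fun _ => (1 : ℝ)) (R * L + Lᵀ * R) = 0 := by
  change L = weightedLaplacian a at hL
  subst hL hR
  have hL1 := weightedLaplacian_mulVec_one a
  have hM1 := diagonal_mul_add_transpose_mul_diagonal_mulVec_one hL1 hrL
  refine ⟨posSemidef_diagonal_mul_add_transpose_mul_diagonal (fun i => (hrpos i).le) hL1 hrL
    fun i j hij => ?_, hM1, ?_⟩
  · rw [weightedLaplacian_apply_of_ne a hij, neg_nonpos]
    exact hnn i j
  · rw [← mulVec_transpose, (isSymm_diagonal_mul_add_transpose_mul_diagonal r _).eq]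
    exact hM1

/-- For the Laplacian `L` of a strongly connected weighted digraph and the positive
row vector `r` with `r L = 0`, `r ⬝ 1 = N`, and `R = diag r`, the matrix
`L̂ = R L + Lᵀ R` is symmetric positive semi-definite with `L̂ 1 = 0` and `1ᵀ L̂ = 0`. -/
theorem stmt_1 (N : ℕ) (hN : 0 < N) (a : Fin N → Fin N → ℝ)
    (hnn : ∀ i j, 0 ≤ a i j) (hdiag : ∀ i, a i i = 0)
    (hconn : ∀ i j : Fin N, i ≠ j →
      Relation.TransGen (fun u v : Fin N => a v u ≠ 0) i j)
    (L : Matrix (Fin N) (Fin N) ℝ)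
    (hL : L = Matrix.of fun i j => (if i = j then ∑ k, a i k else 0) - a i j)
    (r : Fin N → ℝ) (hrpos : ∀ i, 0 < r i)
    (hrL : Matrix.vecMul r L = 0) (hrsum : ∑ i, r i = N)
    (R : Matrix (Fin N) (Fin N) ℝ) (hR : R = Matrix.diagonal r) :
    (R * L + Lᵀ * R).PosSemidef ∧
      (R * L + Lᵀ * R) *ᵥ (fun _ => (1 : ℝ)) = 0 ∧
      Matrix.vecMul (fun _ => (1 : ℝ)) (R * L + Lᵀ * R) = 0 :=
  stmt_1_general N a hnn L hL r hrpos hrL R hR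
end

section
/- Let L̂ be a symmetric positive semi-definite N×N matrix with simple eigenvalue 0 and eigenvector 1_N, and second-smallest eigenvalue λ_2 > 0. Let T = diag(T_1,...,T_N) be block diagonal with each T_i ∈ ℝ^{n×n} orthogonal partitioned as [T_{i1}, T_{i2}], and let G = diag(G_1,...,G_N) with G_i = diag(g_i I_{v_i}, 0_{n−v_i}), g_i > 0. If [T_{11} ... T_{N1}] has full row rank n, then there exists ε > 0 such that Tᵀ(L̂ ⊗ I_n)T + G ≥ ε I_{nN} (i.e., Tᵀ(L̂ ⊗ I_n)T + G is positive definite). -/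
/-!
`Tᵀ (L̂ ⊗ Iₙ) T` and `G` are both positive semidefinite, so their sum is positive definite as
soon as their kernels meet trivially. If `x` lies in both kernels, then `T x ∈ ker (L̂ ⊗ Iₙ)`,
and as `ker L̂` is spanned by `1`, `Tᵢ xᵢ = c` for one `c ∈ ℝⁿ` independent of `i`; hence
`xᵢ = Tᵢᵀ c`. The first `vᵢ` entries of `xᵢ` vanish because `x ∈ ker G`, i.e. `c` is orthogonal
to every column of `[T₁₁ ⋯ T_N1]`, and the rank condition forces `c = 0`. Finally, a positive
definite matrix has its spectrum bounded below by some `ε > 0`.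
-/

open Matrix BigOperators Kronecker

/-- Block diagonal matrix with square blocks `F i`, indexed by `Fin N × Fin n`. -/
def blockDiag (N n : ℕ) (F : Fin N → Matrix (Fin n) (Fin n) ℝ) :
    Matrix (Fin N × Fin n) (Fin N × Fin n) ℝ :=
  Matrix.of fun p q => if p.1 = q.1 then F p.1 p.2 q.2 else 0

namespace Matrix

open scoped MatrixOrder in
theorem PosDef.exists_sub_smul_one_posSemidef {m : Type*} [Fintype m] [DecidableEq m]
    {M : Matrix m m ℝ} (hM : M.PosDef) : ∃ ε > (0 : ℝ), (M - ε • 1).PosSemidef := by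
  rcases isEmpty_or_nonempty m with hm | hm
  · exact ⟨1, one_pos, Subsingleton.elim (M - (1 : ℝ) • 1) 0 ▸ PosSemidef.zero⟩
  obtain ⟨ε, hε, hle⟩ := (CFC.exists_pos_algebraMap_le_iff hM.1.isSelfAdjoint).2
    fun _ hx => hM.isStrictlyPositive.spectrum_pos hx
  exact ⟨ε, hε, by rwa [Algebra.algebraMap_eq_smul_one, le_iff] at hle⟩

section RCLike

open scoped ComplexOrder

variable {m k 𝕜 : Type*} [Fintype m] [Fintype k] [RCLike 𝕜]

theorem PosSemidef.posDef_add_of_mulVec_eq_zero {P Q : Matrix m m 𝕜} (hP : P.PosSemidef)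
    (hQ : Q.PosSemidef) (h : ∀ x, P *ᵥ x = 0 → Q *ᵥ x = 0 → x = 0) : (P + Q).PosDef := by
  refine posDef_iff_dotProduct_mulVec.2 ⟨hP.1.add hQ.1, fun x hx => ?_⟩
  have hPx := hP.dotProduct_mulVec_nonneg x
  have hQx := hQ.dotProduct_mulVec_nonneg x
  rw [add_mulVec, dotProduct_add]
  refine lt_of_le_of_ne (add_nonneg hPx hQx) fun hsum => hx (h x ?_ ?_)
  · exact (hP.dotProduct_mulVec_zero_iff x).1 ((add_eq_zero_iff_of_nonneg hPx hQx).1 hsum.symm).1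
  · exact (hQ.dotProduct_mulVec_zero_iff x).1 ((add_eq_zero_iff_of_nonneg hPx hQx).1 hsum.symm).2

theorem PosSemidef.mulVec_mulVec_eq_zero_of_conjTranspose_mul_mul {K : Matrix k k 𝕜}
    (hK : K.PosSemidef) {B : Matrix k m 𝕜} {x : m → 𝕜} (hx : (Bᴴ * K * B) *ᵥ x = 0) :
    K *ᵥ (B *ᵥ x) = 0 := by
  refine (hK.dotProduct_mulVec_zero_iff _).1 ?_
  rw [star_mulVec, ← dotProduct_mulVec, mulVec_mulVec, mulVec_mulVec, hx, dotProduct_zero]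

end RCLike

theorem vecMul_injective_of_rank_eq_card {m n R : Type*} [Fintype m] [Fintype n] [Field R]
    {W : Matrix m n R} (h : W.rank = Fintype.card m) : Function.Injective W.vecMul := by
  rw [vecMul_injective_iff, linearIndependent_iff_card_eq_finrank_span, ← h,
    rank_eq_finrank_span_row]
  rfl

theorem kronecker_one_mulVec_apply {ι κ R : Type*} [Fintype ι] [Fintype κ] [DecidableEq κ]
    [CommSemiring R] (L : Matrix ι ι R) (y : ι × κ → R) (i : ι) (j : κ) :
    ((L ⊗ₖ (1 : Matrix κ κ R)) *ᵥ y) (i, j) = (L *ᵥ fun i' => y (i', j)) i := by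
  simp [mulVec, dotProduct, one_apply, Fintype.sum_prod_type]

theorem exists_eq_of_kronecker_one_mulVec_eq_zero {ι κ R : Type*} [Fintype ι] [Fintype κ]
    [DecidableEq κ] [CommSemiring R] {L : Matrix ι ι R}
    (hker : ∀ x : ι → R, L *ᵥ x = 0 → ∃ c : R, x = fun _ => c) {y : ι × κ → R}
    (hy : (L ⊗ₖ (1 : Matrix κ κ R)) *ᵥ y = 0) : ∃ c : κ → R, ∀ i j, y (i, j) = c j := by
  choose c hc using fun j => hker (fun i => y (i, j)) <| funext fun i => by
    rw [← kronecker_one_mulVec_apply, hy, Pi.zero_apply, Pi.zero_apply]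
  exact ⟨c, fun i j => congrFun (hc j) i⟩

end Matrix

theorem blockDiag_mulVec_apply {N n : ℕ} (F : Fin N → Matrix (Fin n) (Fin n) ℝ)
    (x : Fin N × Fin n → ℝ) (i : Fin N) (j : Fin n) :
    (blockDiag N n F *ᵥ x) (i, j) = (F i *ᵥ fun j' => x (i, j')) j := by
  simp [_root_.blockDiag, mulVec, dotProduct, Fintype.sum_prod_type]

/-- The matrix `[T₁₁ ⋯ T_N1]` of the paper. -/
def leadingColumns {N n : ℕ} (T : Fin N → Matrix (Fin n) (Fin n) ℝ) (v : Fin N → ℕ)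
    (hv : ∀ i, v i ≤ n) : Matrix (Fin n) (Σ i, Fin (v i)) ℝ :=
  Matrix.of fun j q => T q.1 j (Fin.castLE (hv q.1) q.2)

theorem eq_zero_of_kronecker_one_mulVec_blockDiag_eq_zero {N n : ℕ}
    {L : Matrix (Fin N) (Fin N) ℝ} (hker : ∀ x : Fin N → ℝ, L *ᵥ x = 0 → ∃ c : ℝ, x = fun _ => c)
    {T : Fin N → Matrix (Fin n) (Fin n) ℝ} (hT : ∀ i, (T i)ᵀ * T i = 1)
    {v : Fin N → ℕ} {hv : ∀ i, v i ≤ n} (hrank : (leadingColumns T v hv).rank = n)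
    {x : Fin N × Fin n → ℝ}
    (hLx : (L ⊗ₖ (1 : Matrix (Fin n) (Fin n) ℝ)) *ᵥ (blockDiag N n T *ᵥ x) = 0)
    (hGx : ∀ p : Fin N × Fin n, (p.2 : ℕ) < v p.1 → x p = 0) : x = 0 := by
  obtain ⟨c, hc⟩ := exists_eq_of_kronecker_one_mulVec_eq_zero hker hLx
  have hx : ∀ i, (fun j => x (i, j)) = c ᵥ* T i := fun i => by
    rw [← mulVec_transpose, ← one_mulVec fun j => x (i, j), ← hT i, ← mulVec_mulVec]
    exact congrArg _ (funext fun j => by rw [← blockDiag_mulVec_apply, hc])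
  have hc0 : c = 0 := by
    refine vecMul_injective_of_rank_eq_card (by simpa using hrank) ?_
    funext q
    change (c ᵥ* _) q = (0 ᵥ* _) q
    rw [zero_vecMul, Pi.zero_apply, ← hGx (q.1, Fin.castLE (hv q.1) q.2) (by simp)]
    exact (congrFun (hx q.1) _).symm
  funext p
  simpa [hc0] using congrFun (hx p.1) p.2

theorem stmt_8_general (N n : ℕ) (Lhat : Matrix (Fin N) (Fin N) ℝ)
    (hpsd : Lhat.PosSemidef)
    (hker : ∀ x : Fin N → ℝ, Lhat *ᵥ x = 0 → ∃ c : ℝ, x = fun _ => c)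
    (T : Fin N → Matrix (Fin n) (Fin n) ℝ)
    (hT : ∀ i, (T i)ᵀ * T i = 1)
    (v : Fin N → ℕ) (hv : ∀ i, v i ≤ n)
    (g : Fin N → ℝ) (hg : ∀ i, 0 < g i)
    (hrank : Matrix.rank (Matrix.of fun (j : Fin n) (q : Σ i, Fin (v i)) =>
      T q.1 j (Fin.castLE (hv q.1) q.2)) = n) :
    ∃ ε > (0 : ℝ),
      (((blockDiag N n T)ᵀ * (Lhat ⊗ₖ (1 : Matrix (Fin n) (Fin n) ℝ)) *
          (blockDiag N n T) +
        Matrix.diagonal (fun p : Fin N × Fin n =>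
          if (p.2 : ℕ) < v p.1 then g p.1 else 0)) -
        ε • 1).PosSemidef := by
  have hKpsd := hpsd.kronecker (PosSemidef.one (n := Fin n))
  refine PosDef.exists_sub_smul_one_posSemidef ?_
  rw [← conjTranspose_eq_transpose_of_trivial]
  refine (hKpsd.conjTranspose_mul_mul_same _).posDef_add_of_mulVec_eq_zero
    (posSemidef_diagonal_iff.2 fun p => by split_ifs <;> simp [(hg _).le]) fun x hLx hGx => ?_
  refine eq_zero_of_kronecker_one_mulVec_blockDiag_eq_zero hker hT (hv := hv) hrank
    (hKpsd.mulVec_mulVec_eq_zero_of_conjTranspose_mul_mul hLx) fun p hp => ?_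
  simpa [mulVec_diagonal, hp, (hg p.1).ne'] using congrFun hGx p

/-- Lemma 3 of the paper: if `L̂` is symmetric PSD with simple eigenvalue `0` and
eigenvector `1`, `T = diag(T_1,…,T_N)` with each `T_i` orthogonal, and
`G = diag(g_i I_{v_i}, 0)` with `g_i > 0`, then under the joint full-rank condition
there is `ε > 0` with `Tᵀ (L̂ ⊗ Iₙ) T + G ≥ ε I`. -/
theorem stmt_8 (N n : ℕ) (Lhat : Matrix (Fin N) (Fin N) ℝ)
    (hpsd : Lhat.PosSemidef)
    (h1 : Lhat *ᵥ (fun _ => (1 : ℝ)) = 0)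
    (hker : ∀ x : Fin N → ℝ, Lhat *ᵥ x = 0 → ∃ c : ℝ, x = fun _ => c)
    (T : Fin N → Matrix (Fin n) (Fin n) ℝ)
    (hT : ∀ i, (T i)ᵀ * T i = 1) (hT' : ∀ i, T i * (T i)ᵀ = 1)
    (v : Fin N → ℕ) (hv : ∀ i, v i ≤ n)
    (g : Fin N → ℝ) (hg : ∀ i, 0 < g i)
    (hrank : Matrix.rank (Matrix.of fun (j : Fin n) (q : Σ i, Fin (v i)) =>
      T q.1 j (Fin.castLE (hv q.1) q.2)) = n) :
    ∃ ε > (0 : ℝ),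
      (((blockDiag N n T)ᵀ * (Lhat ⊗ₖ (1 : Matrix (Fin n) (Fin n) ℝ)) *
          (blockDiag N n T) +
        Matrix.diagonal (fun p : Fin N × Fin n =>
          if (p.2 : ℕ) < v p.1 then g p.1 else 0)) -
        ε • 1).PosSemidef :=
  stmt_8_general N n Lhat hpsd hker T hT v hv g hg hrank
end
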